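/- Every biladder on 2p vertices with p ≥ 5 (p ≥ 10 if p is even) is cyclically 5-connected. -/

import Mathlib

open SimpleGraph

/-- A graph has a circuit if it contains a cycle. -/
def HasCircuit {V : Type} (G : SimpleGraph V) : Prop :=
  ∃ (v : V) (w : G.Walk v v), w.IsCycle

/-- `s` is the vertex set of a quadrangle (circuit of length four) of `G`. -/
def IsQuadSet {V : Type} (G : SimpleGraph V) (s : Set V) : Prop :=
  ∃ a b c d : V, s = {a, b, c, d} ∧ a ≠ b ∧ a ≠ c ∧ a ≠ d ∧ b ≠ c ∧ b ≠ d ∧ c ≠ d ∧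
    G.Adj a b ∧ G.Adj b c ∧ G.Adj c d ∧ G.Adj d a

def HasQuadrangle {V : Type} (G : SimpleGraph V) : Prop := ∃ s, IsQuadSet G s

def AtMostOneQuadrangle {V : Type} (G : SimpleGraph V) : Prop :=
  ∀ s t, IsQuadSet G s → IsQuadSet G t → s = t

/-- The edge cut `δA`: edges with one end in `A` and the other outside. -/
def cutEdges {V : Type} (G : SimpleGraph V) (A : Set V) : Set (Sym2 V) :=
  {e | ∃ a b, a ∈ A ∧ b ∉ A ∧ G.Adj a b ∧ e = s(a, b)}

/-- `G` is `k`-connected: more than `k` vertices and removing fewer than `k`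
vertices leaves a connected graph. -/
def IsKConnected {V : Type} [Fintype V] (G : SimpleGraph V) (k : ℕ) : Prop :=
  k < Fintype.card V ∧ ∀ S : Set V, S.ncard < k → (G.induce Sᶜ).Connected

/-- Every vertex has degree three. -/
def IsCubic {V : Type} (G : SimpleGraph V) : Prop :=
  ∀ v : V, (G.neighborSet v).ncard = 3

/-- Cyclically `k`-connected cubic graph: 3-connected, at least `2k` vertices, and
every edge-cut of cardinality less than `k` has a circuit-free side. -/
def CyclicallyKConnected {V : Type} [Fintype V] (G : SimpleGraph V) (k : ℕ) : Prop :=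
  IsKConnected G 3 ∧ 2 * k ≤ Fintype.card V ∧
    ∀ A : Set V, A.Nonempty → Aᶜ.Nonempty → (cutEdges G A).ncard < k →
      ¬ HasCircuit (G.induce A) ∨ ¬ HasCircuit (G.induce Aᶜ)

/-- The induced subgraph on `A` is (exactly) a quadrangle. -/
def IsQuadrangleGraphOn {V : Type} (G : SimpleGraph V) (A : Set V) : Prop :=
  ∃ a b c d : V, A = {a, b, c, d} ∧ a ≠ b ∧ a ≠ c ∧ a ≠ d ∧ b ≠ c ∧ b ≠ d ∧ c ≠ d ∧
    G.Adj a b ∧ G.Adj b c ∧ G.Adj c d ∧ G.Adj d a ∧ ¬ G.Adj a c ∧ ¬ G.Adj b d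

/-- Quad-connected cubic graph. -/
def QuadConnected {V : Type} [Fintype V] (G : SimpleGraph V) : Prop :=
  CyclicallyKConnected G 4 ∧ 10 ≤ Fintype.card V ∧
    ((∃ s t, IsQuadSet G s ∧ IsQuadSet G t ∧ s ≠ t) → 12 ≤ Fintype.card V) ∧
    ∀ A : Set V, A.Nonempty → Aᶜ.Nonempty → (cutEdges G A).ncard ≤ 4 →
      (¬ HasCircuit (G.induce A) ∨ IsQuadrangleGraphOn G A) ∨
      (¬ HasCircuit (G.induce Aᶜ) ∨ IsQuadrangleGraphOn G Aᶜ)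

/-- `G+(u,v,x,y)`: subdivide the edges `uv` and `xy` (new vertices `Sum.inr 0`
resp. `Sum.inr 1`) and join the two new vertices by an edge. -/
def onePlus {V : Type} (G : SimpleGraph V) (u v x y : V) : SimpleGraph (V ⊕ Fin 2) :=
  SimpleGraph.fromRel (fun a b =>
    match a, b with
    | Sum.inl a, Sum.inl b => G.Adj a b ∧ s(a, b) ≠ s(u, v) ∧ s(a, b) ≠ s(x, y)
    | Sum.inl a, Sum.inr i => (i = 0 ∧ (a = u ∨ a = v)) ∨ (i = 1 ∧ (a = x ∨ a = y))
    | Sum.inr _, Sum.inl _ => False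
    | Sum.inr i, Sum.inr j => i ≠ j)

/-- The data of a 1-extension `G+(u,v,x,y)`: `uv`, `xy` are edges and
`u,v,x,y` are pairwise distinct. -/
def OneExtData {V : Type} (G : SimpleGraph V) (u v x y : V) : Prop :=
  G.Adj u v ∧ G.Adj x y ∧ u ≠ x ∧ u ≠ y ∧ v ≠ x ∧ v ≠ y

/-- A long 1-extension: moreover neither `u` nor `v` is adjacent to `x` or `y`. -/
def LongOneExtData {V : Type} (G : SimpleGraph V) (u v x y : V) : Prop :=
  OneExtData G u v x y ∧ ¬ G.Adj u x ∧ ¬ G.Adj u y ∧ ¬ G.Adj v x ∧ ¬ G.Adj v y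

/-- A short 1-extension: a 1-extension that is not long. -/
def ShortOneExtData {V : Type} (G : SimpleGraph V) (u v x y : V) : Prop :=
  OneExtData G u v x y ∧ (G.Adj u x ∨ G.Adj u y ∨ G.Adj v x ∨ G.Adj v y)

/-- A homeomorphic embedding of `G` into `H`. -/
structure HomeoEmb {V W : Type} (G : SimpleGraph V) (H : SimpleGraph W) where
  vmap : V → W
  vinj : Function.Injective vmap
  emap : ∀ ⦃a b : V⦄, G.Adj a b → H.Walk (vmap a) (vmap b)
  emap_path : ∀ ⦃a b : V⦄ (h : G.Adj a b), (emap h).IsPath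
  emap_symm : ∀ ⦃a b : V⦄ (h : G.Adj a b), (emap h.symm).reverse = emap h
  internal : ∀ ⦃a b : V⦄ (h : G.Adj a b) (w : W), w ∈ (emap h).support →
      w ∈ Set.range vmap → w = vmap a ∨ w = vmap b
  edge_disjoint : ∀ ⦃a b c d : V⦄ (h₁ : G.Adj a b) (h₂ : G.Adj c d),
      s(a, b) ≠ s(c, d) → ∀ e, e ∈ (emap h₁).edges → e ∉ (emap h₂).edges
  meet_ends : ∀ ⦃a b c d : V⦄ (h₁ : G.Adj a b) (h₂ : G.Adj c d),
      s(a, b) ≠ s(c, d) → ∀ w, w ∈ (emap h₁).support → w ∈ (emap h₂).support →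
      (w = vmap a ∨ w = vmap b) ∧ (w = vmap c ∨ w = vmap d)

/-- Subdividing the edge `uv` of `G`: the new vertex is `Sum.inr ()`. -/
def subdivideEdge {V : Type} (G : SimpleGraph V) (u v : V) : SimpleGraph (V ⊕ Unit) :=
  SimpleGraph.fromRel (fun a b =>
    match a, b with
    | Sum.inl a, Sum.inl b => G.Adj a b ∧ s(a, b) ≠ s(u, v)
    | Sum.inl a, Sum.inr _ => a = u ∨ a = v
    | _, _ => False)

/-- `S` is obtained from `G` by repeatedly subdividing edges. -/
inductive IsSubdivision {V : Type} (G : SimpleGraph V) : {W : Type} → SimpleGraph W → Prop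
  | refl : IsSubdivision G G
  | step {W : Type} {S : SimpleGraph W} {u v : W} (h : S.Adj u v)
      (hS : IsSubdivision G S) : IsSubdivision G (subdivideEdge S u v)

/-- `H` topologically contains `G`: some graph obtained from `G` by repeatedly
subdividing edges is isomorphic to a subgraph of `H`. -/
def TopContains {W V : Type} (H : SimpleGraph W) (G : SimpleGraph V) : Prop :=
  ∃ (U : Type) (S : SimpleGraph U), IsSubdivision G S ∧
    ∃ f : U → W, Function.Injective f ∧ ∀ a b : U, S.Adj a b → H.Adj (f a) (f b)

/-- The biladder on `2p` vertices; `(false, i)` is `uᵢ` and `(true, i)` is `vᵢ`. -/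
def biladder (p : ℕ) : SimpleGraph (Bool × ZMod p) :=
  SimpleGraph.fromRel (fun a b =>
    (a.1 = false ∧ b.1 = false ∧ b.2 = a.2 + 1) ∨
    (a.1 = true ∧ b.1 = true ∧ b.2 = a.2 + 2) ∨
    (a.1 = false ∧ b.1 = true ∧ a.2 = b.2))

/-!
Write `U` and `V` for the sets of indices `i` with `uᵢ ∈ A`, resp. `vᵢ ∈ A`. Each `i` where `U`
changes between `i` and `i + 1`, each `i` where `V` changes between `i` and `i + 2`, and each `i`
in `U ∆ V` yields its own edge of the cut `δA`, and the first two counts are even. With at most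
four cut edges, either one of `U`, `V` is empty or full, so that one side of the cut lies over
`U ∆ V` and, since the other set changes at least twice, has at most two vertices; or `U = V`
changes exactly twice in each sense, and then `A` or its complement is a single rung. Two
vertices carry no circuit. The hypothesis on even `p` excludes the remaining possibility that `V`
is the set of even or of odd indices: then each of the `p / 2 ≥ 5` pairs `{2k, 2k + 1}` costs a
change of `U` or a cut rung.

Removing at most two vertices leaves the graph connected: if no `v` is removed, the `v`-vertices
are joined by `v`-edges and, for even `p`, one intact `u`-edge; otherwise at most one `u`-vertex is
removed and every vertex reaches the remaining `u`-path.
-/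

open scoped symmDiff

lemma eq_or_eq_or_eq_of_ncard_le_two {α : Type*} {S : Set α} (hS : S.ncard ≤ 2)
    {x y z : α} (hx : x ∈ S) (hy : y ∈ S) (hz : z ∈ S) (hfin : S.Finite := by toFinite_tac) :
    x = y ∨ x = z ∨ y = z := by
  by_contra! hne
  exact hS.not_gt ((Set.two_lt_ncard_iff hfin).mpr ⟨x, y, z, hx, hy, hz, hne⟩)

lemma even_ncard_symmDiff {α : Type*} {s t : Set α} (hs : s.Finite) (ht : t.Finite)
    (h : s.ncard = t.ncard) : Even (s ∆ t).ncard := by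
  have hst := Set.ncard_inter_add_ncard_sdiff_eq_ncard s t hs
  have hts := Set.ncard_inter_add_ncard_sdiff_eq_ncard t s ht
  rw [Set.inter_comm] at hts
  change Even (s \ t ∪ t \ s).ncard
  rw [Set.ncard_union_eq disjoint_sdiff_sdiff hs.sdiff ht.sdiff]
  exact ⟨(s \ t).ncard, by omega⟩

section Switches

variable {G : Type*}

def switches [Add G] (d : G) (S : Set G) : Set G := S ∆ ((· + d) ⁻¹' S)

lemma mem_switches [Add G] {d i : G} {S : Set G} :
    i ∈ switches d S ↔ ¬(i ∈ S ↔ i + d ∈ S) := by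
  simp only [switches, Set.mem_symmDiff, Set.mem_preimage]
  tauto

lemma switches_compl [Add G] (d : G) (S : Set G) : switches d Sᶜ = switches d S := by
  rw [switches, Set.preimage_compl, compl_symmDiff_compl, switches]

lemma switches_empty [Add G] (d : G) : switches d ∅ = ∅ := by
  simp [switches]

lemma switches_univ [Add G] (d : G) : switches d Set.univ = ∅ := by
  rw [← Set.compl_empty, switches_compl, switches_empty]

lemma switches_symmDiff [Add G] (d : G) (S T : Set G) :
    switches d (S ∆ T) = switches d S ∆ switches d T := by
  rw [switches, Set.preimage_symmDiff, symmDiff_symmDiff_symmDiff_comm, switches, switches]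

lemma switches_add_self [AddSemigroup G] (d : G) (S : Set G) :
    switches (d + d) S = switches d (switches d S) := by
  ext i
  simp only [mem_switches, add_assoc]
  tauto

lemma switches_singleton [AddGroup G] (d j : G) : switches d {j} = {j} ∆ {j - d} := by
  ext i
  simp [switches, sub_eq_add_neg]

lemma add_nsmul_mem_iff_of_switches_eq_empty [AddMonoid G] {d : G} {S : Set G}
    (h : switches d S = ∅) (x : G) (n : ℕ) : x + n • d ∈ S ↔ x ∈ S := by
  induction n with
  | zero => simp
  | succ n ih =>
    have hx : x + n • d ∉ switches d S := h ▸ Set.notMem_empty _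
    rw [mem_switches, not_not] at hx
    rw [succ_nsmul, ← add_assoc, ← hx, ih]

lemma even_ncard_switches [AddGroup G] [Finite G] (d : G) (S : Set G) :
    Even (switches d S).ncard := by
  refine even_ncard_symmDiff S.toFinite (Set.toFinite _) ?_
  exact (Set.ncard_preimage_of_injective_subset_range (add_left_injective d)
    fun x _ => add_right_surjective d x).symm

lemma two_le_ncard_switches [AddGroup G] [Finite G] {d : G} {S : Set G}
    (h : (switches d S).Nonempty) : 2 ≤ (switches d S).ncard := by
  obtain ⟨k, hk⟩ := even_ncard_switches d S
  have := (Set.ncard_pos (Set.toFinite _)).mpr h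
  omega

end Switches

section ZMod

variable {n : ℕ}

lemma eq_of_natCast_eq_of_lt {a b : ℕ} (ha : a < n) (hb : b < n) (h : (a : ZMod n) = b) :
    a = b := by
  rwa [ZMod.natCast_eq_natCast_iff', Nat.mod_eq_of_lt ha, Nat.mod_eq_of_lt hb] at h

lemma natCast_ne_zero_of_lt {k : ℕ} (h0 : 0 < k) (hk : k < n) : (k : ZMod n) ≠ 0 := by
  rw [Ne, ZMod.natCast_eq_zero_iff]
  exact fun h => absurd (Nat.le_of_dvd h0 h) (by omega)

lemma exists_add_one_notMem_of_ncard_le_two [NeZero n] (hn : 6 ≤ n) {T : Set (ZMod n)}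
    (hT : T.ncard ≤ 2) : ∃ k, k ∉ T ∧ k + 1 ∉ T := by
  by_contra! h
  have hpair : ∀ c : ℕ, ∃ e < 2, ((c + e : ℕ) : ZMod n) ∈ T := fun c => by
    by_cases hc : (c : ZMod n) ∈ T
    · exact ⟨0, by norm_num, by simpa using hc⟩
    · exact ⟨1, by norm_num, by simpa using h _ hc⟩
  choose e he hmem using hpair
  have hinj : ∀ a b, a < 3 → b < 3 →
      ((2 * a + e (2 * a) : ℕ) : ZMod n) = ((2 * b + e (2 * b) : ℕ) : ZMod n) → a = b :=
    fun a b ha hb hab => by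
      have := he (2 * a)
      have := he (2 * b)
      have := eq_of_natCast_eq_of_lt (by omega) (by omega) hab
      omega
  rcases eq_or_eq_or_eq_of_ncard_le_two hT (hmem 0) (hmem 2) (hmem 4) with h | h | h
  · exact absurd (hinj 0 1 (by norm_num) (by norm_num) h) (by norm_num)
  · exact absurd (hinj 0 2 (by norm_num) (by norm_num) h) (by norm_num)
  · exact absurd (hinj 1 2 (by norm_num) (by norm_num) h) (by norm_num)

lemma eq_empty_or_univ_of_switches_eq_empty [NeZero n] {d : ZMod n} (hd : IsUnit d)
    {S : Set (ZMod n)} (h : switches d S = ∅) : S = ∅ ∨ S = Set.univ := by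
  obtain ⟨u, rfl⟩ := hd
  have key : ∀ x y, y ∈ S ↔ x ∈ S := fun x y => by
    have hy : y = x + ((y - x) * ↑u⁻¹).val • (u : ZMod n) := by
      rw [nsmul_eq_mul, ZMod.natCast_zmod_val, mul_assoc, Units.inv_mul, mul_one]
      ring
    rw [hy, add_nsmul_mem_iff_of_switches_eq_empty h]
  rcases S.eq_empty_or_nonempty with hS | ⟨x, hx⟩
  · exact Or.inl hS
  · exact Or.inr (Set.eq_univ_of_forall fun y => (key x y).mpr hx)

lemma switches_one_eq_empty_iff [NeZero n] {S : Set (ZMod n)} :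
    switches 1 S = ∅ ↔ S = ∅ ∨ S = Set.univ := by
  refine ⟨eq_empty_or_univ_of_switches_eq_empty isUnit_one, ?_⟩
  rintro (rfl | rfl)
  exacts [switches_empty 1, switches_univ 1]

lemma switches_one_nonempty [NeZero n] {S : Set (ZMod n)} (h0 : 0 < S.ncard)
    (hn : S.ncard < n) : (switches 1 S).Nonempty := by
  rw [Set.nonempty_iff_ne_empty, Ne, switches_one_eq_empty_iff]
  rintro (rfl | rfl)
  · simp at h0
  · simp [Set.ncard_univ] at hn

lemma exists_switches_one_eq_pair [Fact (1 < n)] {S : Set (ZMod n)}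
    (h1 : (switches 1 S).ncard = 2) (h2 : (switches 2 S).ncard ≤ 2) :
    ∃ k, switches 1 S = {k, k + 1} := by
  obtain ⟨i, j, hij, hT⟩ := Set.ncard_eq_two.mp h1
  by_cases hj : j = i + 1
  · exact ⟨i, hj ▸ hT⟩
  by_cases hi : i = j + 1
  · exact ⟨j, by rw [hT, hi, Set.pair_comm]⟩
  -- otherwise `i - 1`, `i` and `j` are three `1`-switches of `{i, j}`
  rw [← one_add_one_eq_two, switches_add_self, hT] at h2
  refine absurd ((Set.two_lt_ncard_iff (Set.toFinite _)).mpr ⟨i, j, i - 1, ?_⟩) h2.not_gt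
  have hi1 : i - 1 ≠ j := fun h => hi (by rw [← h, sub_add_cancel])
  simp [mem_switches, hij, hij.symm, Ne.symm hj, Ne.symm hi, hi1, Ne.symm hi1, eq_sub_iff_add_eq]

lemma eq_singleton_or_compl_of_switches_one_eq_pair [Fact (1 < n)] {S : Set (ZMod n)}
    {k : ZMod n} (h : switches 1 S = {k, k + 1}) : S = {k + 1} ∨ S = {k + 1}ᶜ := by
  have hflip : switches 1 (S ∆ {k + 1}) = ∅ := by
    rw [switches_symmDiff, h, switches_singleton, add_sub_cancel_right]
    ext x
    simp only [Set.mem_symmDiff, Set.mem_insert_iff, Set.mem_singleton_iff,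
      Set.mem_empty_iff_false, iff_false]
    have : k ≠ k + 1 := by simp
    grind
  have hS := symmDiff_symmDiff_cancel_right {k + 1} S
  rcases switches_one_eq_empty_iff.mp hflip with h0 | h0 <;> rw [h0] at hS
  · exact Or.inl (hS.symm.trans (bot_symmDiff _))
  · exact Or.inr (hS.symm.trans (top_symmDiff _))

lemma five_le_ncard_switches_add_ncard_symmDiff [NeZero n] (hn : 10 ≤ n) {U V : Set (ZMod n)}
    (h2 : switches 2 V = ∅) (h1 : (switches 1 V).Nonempty) :
    5 ≤ (switches 1 U).ncard + (U ∆ V).ncard := by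
  obtain ⟨i, hi⟩ := h1
  -- `V` is `2`-periodic, so every `i + 2m` is a `1`-switch of `V`, and on each pair
  -- `{i + 2m, i + 2m + 1}` either `U` switches as well or `U` and `V` differ.
  have hpair : ∀ m : ℕ, ∃ e < 2, i + ((2 * m + e : ℕ) : ZMod n) ∈ switches 1 U ∪ U ∆ V := by
    intro m
    have hshift : ∀ x, x + ((2 * m : ℕ) : ZMod n) ∈ V ↔ x ∈ V := fun x => by
      rw [← add_nsmul_mem_iff_of_switches_eq_empty h2 x m, nsmul_eq_mul, Nat.cast_mul,
        Nat.cast_ofNat, mul_comm]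
    have hx : i + ((2 * m : ℕ) : ZMod n) ∈ switches 1 V := by
      rw [mem_switches] at hi ⊢
      rwa [hshift, add_right_comm, hshift]
    by_contra! hne
    have h0 := hne 0 (by norm_num)
    have h1 := hne 1 (by norm_num)
    simp only [Set.mem_union, Set.mem_symmDiff, mem_switches, not_or, Nat.cast_add, add_zero,
      Nat.cast_one, ← add_assoc] at h0 h1 hx
    tauto
  choose e he hmem using hpair
  calc 5 = (Set.Iio 5).ncard := (Set.ncard_Iio_nat 5).symm
    _ ≤ (switches 1 U ∪ U ∆ V).ncard := by
      refine Set.ncard_le_ncard_of_injOn (fun m => i + ((2 * m + e m : ℕ) : ZMod n))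
        (fun m _ => hmem m) ?_
      intro m hm m' hm' hmm'
      have := he m
      have := he m'
      have := eq_of_natCast_eq_of_lt (by simp at hm; omega) (by simp at hm'; omega)
        (add_left_cancel hmm')
      omega
    _ ≤ _ := Set.ncard_union_le _ _

lemma switches_two_nonempty [NeZero n] (he : Even n → 10 ≤ n) {U V : Set (ZMod n)}
    (hV : (switches 1 V).Nonempty) (hcount : (switches 1 U).ncard + (U ∆ V).ncard < 5) :
    (switches 2 V).Nonempty := by
  rw [Set.nonempty_iff_ne_empty]
  intro h2
  rcases Nat.even_or_odd n with hev | hodd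
  · exact absurd (five_le_ncard_switches_add_ncard_symmDiff (U := U) (he hev) h2 hV) (by omega)
  · have hunit : IsUnit (2 : ZMod n) := by
      simpa using (ZMod.isUnit_iff_coprime 2 n).mpr (Nat.coprime_two_left.mpr hodd)
    rcases eq_empty_or_univ_of_switches_eq_empty hunit h2 with rfl | rfl
    · simp [switches_empty] at hV
    · simp [switches_univ] at hV

end ZMod

section Graphs

variable {V : Type} {G : SimpleGraph V}

lemma cutEdges_compl (A : Set V) : cutEdges G Aᶜ = cutEdges G A := by
  have key : ∀ B : Set V, cutEdges G Bᶜ ⊆ cutEdges G B := by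
    rintro B e ⟨a, b, ha, hb, hab, rfl⟩
    exact ⟨b, a, not_not.mp hb, ha, hab.symm, Sym2.eq_swap⟩
  exact (key A).antisymm (by simpa using key Aᶜ)

lemma mem_cutEdges_of_adj {A : Set V} {x y : V} (h : G.Adj x y) (hxy : ¬(x ∈ A ↔ y ∈ A)) :
    s(x, y) ∈ cutEdges G A := by
  by_cases hx : x ∈ A
  · exact ⟨x, y, hx, fun hy => hxy (iff_of_true hx hy), h, rfl⟩
  · exact ⟨y, x, not_not.mp fun hy => hxy (iff_of_false hx hy), hx, h.symm, Sym2.eq_swap⟩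

lemma three_le_ncard_of_hasCircuit_induce [Finite V] {A : Set V}
    (h : HasCircuit (G.induce A)) : 3 ≤ A.ncard := by
  obtain ⟨v, c, hc⟩ := h
  rw [← Nat.card_coe_set_eq]
  calc 3 ≤ c.length := hc.three_le_length
    _ = c.support.tail.length := by simp
    _ ≤ Nat.card A := hc.support_nodup.length_le_natCard

def SimpleGraph.ReachableIn (G : SimpleGraph V) (s : Set V) (x y : V) : Prop :=
  ∃ w : G.Walk x y, ∀ z ∈ w.support, z ∈ s

namespace SimpleGraph.ReachableIn

variable {s : Set V} {x y z : V}

lemma refl (hx : x ∈ s) : G.ReachableIn s x x := ⟨.nil, by simpa⟩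

lemma of_adj (hx : x ∈ s) (hy : y ∈ s) (h : G.Adj x y) : G.ReachableIn s x y :=
  ⟨h.toWalk, by simp [hx, hy]⟩

lemma symm : G.ReachableIn s x y → G.ReachableIn s y x := fun ⟨w, hw⟩ => ⟨w.reverse, by simpa⟩

lemma trans : G.ReachableIn s x y → G.ReachableIn s y z → G.ReachableIn s x z :=
  fun ⟨w, hw⟩ ⟨w', hw'⟩ => ⟨w.append w', by simp only [Walk.mem_support_append_iff]; grind⟩

lemma of_chain (f : ℕ → V) (n : ℕ) (hmem : ∀ k ≤ n, f k ∈ s)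
    (hadj : ∀ k < n, G.Adj (f k) (f (k + 1))) : G.ReachableIn s (f 0) (f n) := by
  induction n with
  | zero => exact refl (hmem 0 le_rfl)
  | succ n ih =>
    exact (ih (fun k hk => hmem k (by omega)) (fun k hk => hadj k (by omega))).trans
      (of_adj (hmem n (by omega)) (hmem (n + 1) le_rfl) (hadj n (by omega)))

end SimpleGraph.ReachableIn

lemma induce_connected_of_reachableIn {s : Set V} {u : V} (hu : u ∈ s)
    (h : ∀ v ∈ s, G.ReachableIn s u v) : (G.induce s).Connected := by
  refine induce_connected_of_patches u hu fun {v} hv => ?_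
  obtain ⟨w, hw⟩ := h v hv
  exact ⟨_, hw, w.start_mem_support, w.end_mem_support,
    (w.connected_induce_support).preconnected _ _⟩

end Graphs

section BoolProd

variable {α : Type*} {A : Set (Bool × α)}

lemma ncard_le_ncard_symmDiff_of_preimage_eq_empty [Finite α] {b : Bool}
    (h : Prod.mk b ⁻¹' A = ∅) :
    A.ncard ≤ ((Prod.mk false ⁻¹' A) ∆ (Prod.mk true ⁻¹' A)).ncard := by
  have hsub : A ⊆ Prod.mk (!b) '' ((Prod.mk false ⁻¹' A) ∆ (Prod.mk true ⁻¹' A)) := by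
    rintro ⟨c, i⟩ hci
    have hb : (b, i) ∉ A := Set.eq_empty_iff_forall_notMem.mp h i
    cases b <;> cases c <;>
      first | exact absurd hci hb | exact ⟨i, by simp [Set.mem_symmDiff, hci, hb], rfl⟩
  exact (Set.ncard_le_ncard hsub (Set.toFinite _)).trans (Set.ncard_image_le (Set.toFinite _))

lemma ncard_le_two_of_preimage_subset_singleton {j : α} (hf : Prod.mk false ⁻¹' A ⊆ {j})
    (ht : Prod.mk true ⁻¹' A ⊆ {j}) : A.ncard ≤ 2 := by
  have hsub : A ⊆ {(false, j), (true, j)} := by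
    rintro ⟨c, i⟩ hci
    cases c
    · simp [Set.mem_singleton_iff.mp (hf hci)]
    · simp [Set.mem_singleton_iff.mp (ht hci)]
  calc A.ncard ≤ ({(false, j), (true, j)} : Set (Bool × α)).ncard :=
        Set.ncard_le_ncard hsub (Set.toFinite _)
    _ ≤ 2 := (Set.ncard_insert_le _ _).trans (by simp)

end BoolProd

section Biladder

variable {p : ℕ}

lemma biladder_adj_succ (h : (1 : ZMod p) ≠ 0) (i : ZMod p) :
    (biladder p).Adj (false, i) (false, i + 1) := by
  simp [biladder, h]

lemma biladder_adj_add_two (h : (2 : ZMod p) ≠ 0) (i : ZMod p) :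
    (biladder p).Adj (true, i) (true, i + 2) := by
  simp [biladder, h]

lemma biladder_adj_rung (i : ZMod p) : (biladder p).Adj (false, i) (true, i) := by
  simp [biladder]

lemma biladder_reachableIn_true_add_two_mul (h2 : (2 : ZMod p) ≠ 0) {S : Set (Bool × ZMod p)}
    (hv : ∀ i, (true, i) ∉ S) (x : ZMod p) (m : ℕ) :
    (biladder p).ReachableIn Sᶜ (true, x) (true, x + 2 * m) := by
  have := ReachableIn.of_chain (G := biladder p) (s := Sᶜ) (fun k : ℕ => (true, x + 2 * k)) m
    (fun k _ => hv _) fun k _ => by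
      convert biladder_adj_add_two h2 (x + 2 * k) using 2
      push_cast
      ring
  simpa using this

variable [NeZero p]

lemma ncard_switches_add_le_ncard_cutEdges (h4 : (4 : ZMod p) ≠ 0) (A : Set (Bool × ZMod p)) :
    (switches 1 (Prod.mk false ⁻¹' A)).ncard + (switches 2 (Prod.mk true ⁻¹' A)).ncard +
      ((Prod.mk false ⁻¹' A) ∆ (Prod.mk true ⁻¹' A)).ncard ≤ (cutEdges (biladder p) A).ncard := by
  have h2 : (2 : ZMod p) ≠ 0 := fun h => h4 (by
    rw [show (4 : ZMod p) = 2 * 2 by norm_num, h, zero_mul])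
  have h1 : (1 : ZMod p) ≠ 0 := fun h => h2 (by rw [← one_add_one_eq_two, h, add_zero])
  set eU : ZMod p → Sym2 (Bool × ZMod p) := fun i => s((false, i), (false, i + 1))
  set eV : ZMod p → Sym2 (Bool × ZMod p) := fun i => s((true, i), (true, i + 2))
  set eR : ZMod p → Sym2 (Bool × ZMod p) := fun i => s((false, i), (true, i))
  have hU : eU.Injective := fun i j hij => by
    simp only [eU, Sym2.eq_iff, Prod.mk.injEq, true_and] at hij
    rcases hij with h | ⟨rfl, h⟩
    · exact h.1
    · exact absurd (show (2 : ZMod p) = 0 by linear_combination h) h2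
  have hV : eV.Injective := fun i j hij => by
    simp only [eV, Sym2.eq_iff, Prod.mk.injEq, true_and] at hij
    rcases hij with h | ⟨rfl, h⟩
    · exact h.1
    · exact absurd (show (4 : ZMod p) = 0 by linear_combination h) h4
  have hR : eR.Injective := fun i j hij => by simpa [eR] using hij
  have hsub : eU '' switches 1 (Prod.mk false ⁻¹' A) ∪ eV '' switches 2 (Prod.mk true ⁻¹' A) ∪
      eR '' ((Prod.mk false ⁻¹' A) ∆ (Prod.mk true ⁻¹' A)) ⊆ cutEdges (biladder p) A := by
    rintro _ ((⟨i, hi, rfl⟩ | ⟨i, hi, rfl⟩) | ⟨i, hi, rfl⟩)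
    · exact mem_cutEdges_of_adj (biladder_adj_succ h1 i) (mem_switches.mp hi)
    · exact mem_cutEdges_of_adj (biladder_adj_add_two h2 i) (mem_switches.mp hi)
    · refine mem_cutEdges_of_adj (biladder_adj_rung i) ?_
      simp only [Set.mem_symmDiff, Set.mem_preimage] at hi
      tauto
  refine le_of_eq_of_le ?_ (Set.ncard_le_ncard hsub (Set.toFinite _))
  rw [Set.ncard_union_eq, Set.ncard_union_eq, Set.ncard_image_of_injective _ hU,
    Set.ncard_image_of_injective _ hV, Set.ncard_image_of_injective _ hR]
  · rw [Set.disjoint_left]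
    rintro _ ⟨i, -, rfl⟩ ⟨j, -, h⟩
    simp [eU, eV] at h
  · rw [Set.disjoint_union_left, Set.disjoint_left, Set.disjoint_left]
    constructor <;> rintro _ ⟨i, -, rfl⟩ ⟨j, -, h⟩ <;> simp [eU, eV, eR] at h

lemma biladder_ncard_le_two_of_preimage_eq_empty (hp : 5 ≤ p) (he : Even p → 10 ≤ p)
    {A : Set (Bool × ZMod p)} (hA : A.Nonempty) (hcut : (cutEdges (biladder p) A).ncard < 5)
    {b : Bool} (hb : Prod.mk b ⁻¹' A = ∅) : A.ncard ≤ 2 := by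
  have h4 : (4 : ZMod p) ≠ 0 := by exact_mod_cast natCast_ne_zero_of_lt four_pos (by omega)
  have hcount := (ncard_switches_add_le_ncard_cutEdges h4 A).trans_lt hcut
  have hAr := ncard_le_ncard_symmDiff_of_preimage_eq_empty hb
  have hA0 := (Set.ncard_pos (Set.toFinite _)).mpr hA
  set U := Prod.mk false ⁻¹' A
  set V := Prod.mk true ⁻¹' A
  cases b
  · have hr : U ∆ V = V := by rw [show U = ∅ from hb]; exact bot_symmDiff V
    rw [hr] at hAr hcount
    have hV := switches_one_nonempty (S := V) (by omega) (by omega)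
    have := two_le_ncard_switches (switches_two_nonempty he hV (by rw [hr]; omega))
    omega
  · have hr : U ∆ V = U := by rw [show V = ∅ from hb]; exact symmDiff_bot U
    rw [hr] at hAr hcount
    have := two_le_ncard_switches (switches_one_nonempty (S := U) (by omega) (by omega))
    omega

lemma biladder_ncard_le_two_of_switches_nonempty (hp : 5 ≤ p) (he : Even p → 10 ≤ p)
    {A : Set (Bool × ZMod p)} (hcut : (cutEdges (biladder p) A).ncard < 5)
    (hU : (switches 1 (Prod.mk false ⁻¹' A)).Nonempty)
    (hV : (switches 1 (Prod.mk true ⁻¹' A)).Nonempty) : A.ncard ≤ 2 ∨ Aᶜ.ncard ≤ 2 := by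
  have h4 : (4 : ZMod p) ≠ 0 := by exact_mod_cast natCast_ne_zero_of_lt four_pos (by omega)
  have hcount := (ncard_switches_add_le_ncard_cutEdges h4 A).trans_lt hcut
  set U := Prod.mk false ⁻¹' A
  set V := Prod.mk true ⁻¹' A
  have ha := two_le_ncard_switches hU
  have hb := two_le_ncard_switches (switches_two_nonempty (U := U) he hV (by omega))
  have hUV : U = V := symmDiff_eq_bot.mp ((Set.ncard_eq_zero (Set.toFinite _)).mp (by omega))
  have : Fact (1 < p) := ⟨by omega⟩
  obtain ⟨k, hk⟩ := exists_switches_one_eq_pair (S := U) (by omega) (by rw [hUV]; omega)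
  rcases eq_singleton_or_compl_of_switches_one_eq_pair hk with h | h <;>
    have h' : V = _ := hUV ▸ h
  · exact Or.inl (ncard_le_two_of_preimage_subset_singleton h.le h'.le)
  · refine Or.inr (ncard_le_two_of_preimage_subset_singleton (j := k + 1) ?_ ?_) <;>
      rw [Set.preimage_compl, Set.compl_subset_comm]
    exacts [h.ge, h'.ge]

theorem biladder_ncard_le_two_of_ncard_cutEdges_lt (hp : 5 ≤ p) (he : Even p → 10 ≤ p)
    {A : Set (Bool × ZMod p)} (hA : A.Nonempty) (hAc : Aᶜ.Nonempty)
    (hcut : (cutEdges (biladder p) A).ncard < 5) : A.ncard ≤ 2 ∨ Aᶜ.ncard ≤ 2 := by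
  by_cases h : ∃ b, ¬(switches 1 (Prod.mk b ⁻¹' A)).Nonempty
  · obtain ⟨b, hb⟩ := h
    rw [Set.not_nonempty_iff_eq_empty, switches_one_eq_empty_iff] at hb
    rcases hb with hb | hb
    · exact Or.inl (biladder_ncard_le_two_of_preimage_eq_empty hp he hA hcut hb)
    · refine Or.inr (biladder_ncard_le_two_of_preimage_eq_empty hp he hAc ?_ (b := b) ?_)
      · rwa [cutEdges_compl]
      · rw [Set.preimage_compl, hb, Set.compl_univ]
  · simp only [not_exists, not_not] at h
    exact biladder_ncard_le_two_of_switches_nonempty hp he hcut (h false) (h true)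

theorem biladder_induce_compl_connected_of_forall_true_notMem (hp : 5 ≤ p)
    (he : Even p → 10 ≤ p) {S : Set (Bool × ZMod p)} (hS : S.ncard ≤ 2)
    (hv : ∀ i, (true, i) ∉ S) : ((biladder p).induce Sᶜ).Connected := by
  have h1 : (1 : ZMod p) ≠ 0 := by exact_mod_cast natCast_ne_zero_of_lt one_pos (by omega)
  have h2 : (2 : ZMod p) ≠ 0 := by exact_mod_cast natCast_ne_zero_of_lt two_pos (by omega)
  have hstep := biladder_reachableIn_true_add_two_mul h2 hv
  -- For even `p` the `v`-vertices form two cycles, joined through an intact `u`-edge;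
  -- for odd `p = 2m + 1` one has `1 = 2 (m + 1)`.
  obtain ⟨k, hk⟩ : ∃ k, (biladder p).ReachableIn Sᶜ (true, k) (true, k + 1) := by
    rcases Nat.even_or_odd p with hev | ⟨m, hm⟩
    · obtain ⟨k, hk, hk1⟩ := exists_add_one_notMem_of_ncard_le_two (T := Prod.mk false ⁻¹' S)
        (by have := he hev; omega) ((Set.ncard_le_ncard_of_injOn (Prod.mk false) (fun _ h => h)
          (Prod.mk_right_injective false).injOn).trans hS)
      exact ⟨k, ((ReachableIn.of_adj hk (hv k) (biladder_adj_rung k)).symm.trans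
        (ReachableIn.of_adj hk hk1 (biladder_adj_succ h1 k))).trans
        (ReachableIn.of_adj hk1 (hv _) (biladder_adj_rung _))⟩
    · refine ⟨0, ?_⟩
      convert hstep 0 (m + 1) using 2
      have : ((2 * m + 1 : ℕ) : ZMod p) = 0 := hm ▸ ZMod.natCast_self p
      push_cast at this ⊢
      linear_combination -this
  have hall : ∀ x, (biladder p).ReachableIn Sᶜ (true, k) (true, x) := fun x => by
    set n := (x - k).val
    have hx : x = k + (n : ZMod p) := by rw [ZMod.natCast_zmod_val]; ring
    have hn : (n : ZMod p) = 2 * ((n / 2 : ℕ) : ZMod p) + ((n % 2 : ℕ) : ZMod p) := by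
      exact_mod_cast congrArg (Nat.cast (R := ZMod p)) (Nat.div_add_mod n 2).symm
    rcases Nat.mod_two_eq_zero_or_one n with h0 | h0 <;> rw [h0] at hn
    · convert hstep k (n / 2) using 2
      rw [hx, hn]
      simp
    · convert hk.trans (hstep (k + 1) (n / 2)) using 2
      rw [hx, hn]
      push_cast
      ring
  refine induce_connected_of_reachableIn (hv k) ?_
  rintro ⟨_ | _, x⟩ hx
  · exact (hall x).trans (ReachableIn.of_adj hx (hv x) (biladder_adj_rung x)).symm
  · exact hall x

lemma biladder_reachableIn_false_of_notMem (h1 : (1 : ZMod p) ≠ 0) {S : Set (Bool × ZMod p)}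
    {c : ZMod p} (hc : ∀ i, (false, i) ∈ S → i = c) {x : ZMod p} (hx : (false, x) ∉ S) :
    (biladder p).ReachableIn Sᶜ (false, c + 1) (false, x) := by
  set N := (x - (c + 1)).val
  have hmem : ∀ k ≤ N, (false, c + 1 + (k : ZMod p)) ∈ Sᶜ := fun k hk => by
    rcases hk.lt_or_eq with hk | rfl
    · intro hS
      have := hc _ hS
      refine natCast_ne_zero_of_lt (k := k + 1) (n := p) (by omega)
        (by have := ZMod.val_lt (x - (c + 1)); omega) ?_
      push_cast
      linear_combination this
    · simpa [N, ZMod.natCast_zmod_val] using hx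
  have := ReachableIn.of_chain (G := biladder p) (fun k : ℕ => (false, c + 1 + (k : ZMod p))) N
    hmem fun k _ => by simpa [add_assoc] using biladder_adj_succ h1 (c + 1 + k)
  simpa [N, ZMod.natCast_zmod_val] using this

theorem biladder_induce_compl_connected_of_true_mem (hp : 5 ≤ p) {S : Set (Bool × ZMod p)}
    (hS : S.ncard ≤ 2) {m : ZMod p} (hm : (true, m) ∈ S) :
    ((biladder p).induce Sᶜ).Connected := by
  have h1 : (1 : ZMod p) ≠ 0 := by exact_mod_cast natCast_ne_zero_of_lt one_pos (by omega)
  have h2 : (2 : ZMod p) ≠ 0 := by exact_mod_cast natCast_ne_zero_of_lt two_pos (by omega)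
  have h4 : (4 : ZMod p) ≠ 0 := by exact_mod_cast natCast_ne_zero_of_lt four_pos (by omega)
  have hthree := fun {x y : Bool × ZMod p} (hx : x ∈ S) (hy : y ∈ S) =>
    eq_or_eq_or_eq_of_ncard_le_two hS hx hy hm
  obtain ⟨c, hc⟩ : ∃ c, ∀ i, (false, i) ∈ S → i = c := by
    by_cases h : ∃ c, (false, c) ∈ S
    · obtain ⟨c, hcS⟩ := h
      exact ⟨c, fun i hi => by simpa using hthree hi hcS⟩
    · exact ⟨0, fun i hi => absurd ⟨i, hi⟩ h⟩
  have hbase : (false, c + 1) ∉ S := fun h => h1 (by simpa using hc _ h)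
  have hv : ∀ x, (true, x) ∉ S →
      ∃ y, (false, y) ∉ S ∧ (biladder p).ReachableIn Sᶜ (true, x) (false, y) := fun x hx => by
    by_cases hxS : (false, x) ∈ S
    · obtain ⟨y, hxy, hym⟩ : ∃ y, (y = x + 2 ∨ y + 2 = x) ∧ y ≠ m := by
        by_cases hxm : x + 2 = m
        · exact ⟨x - 2, Or.inr (sub_add_cancel x 2), fun h => h4 (by linear_combination hxm - h)⟩
        · exact ⟨x + 2, Or.inl rfl, hxm⟩
      have hyx : y ≠ x := by rintro rfl; rcases hxy with h | h <;> simp [h2] at h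
      have htrue : (true, y) ∉ S := fun h => by simpa [hym] using hthree h hxS
      have hfalse : (false, y) ∉ S := fun h => by simpa [hyx] using hthree h hxS
      refine ⟨y, hfalse, ReachableIn.trans ?_
        (ReachableIn.of_adj hfalse htrue (biladder_adj_rung y)).symm⟩
      rcases hxy with rfl | rfl
      · exact ReachableIn.of_adj hx htrue (biladder_adj_add_two h2 x)
      · exact (ReachableIn.of_adj htrue hx (biladder_adj_add_two h2 y)).symm
    · exact ⟨x, hxS, (ReachableIn.of_adj hxS hx (biladder_adj_rung x)).symm⟩
  refine induce_connected_of_reachableIn hbase ?_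
  rintro ⟨_ | _, x⟩ hx
  · exact biladder_reachableIn_false_of_notMem h1 hc hx
  · obtain ⟨y, hy, hxy⟩ := hv x hx
    exact (biladder_reachableIn_false_of_notMem h1 hc hy).trans hxy.symm

theorem biladder_induce_compl_connected (hp : 5 ≤ p) (he : Even p → 10 ≤ p)
    {S : Set (Bool × ZMod p)} (hS : S.ncard ≤ 2) : ((biladder p).induce Sᶜ).Connected := by
  by_cases hv : ∃ m, (true, m) ∈ S
  · obtain ⟨m, hm⟩ := hv
    exact biladder_induce_compl_connected_of_true_mem hp hS hm
  · exact biladder_induce_compl_connected_of_forall_true_notMem hp he hS (not_exists.mp hv)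

end Biladder

/-- every biladder on 2p vertices (p ≥ 5, and p ≥ 10 if p even)
is cyclically 5-connected. -/
theorem biladder_cyclically5Connected (p : ℕ) [NeZero p] (hp : 5 ≤ p)
    (he : Even p → 10 ≤ p) :
    CyclicallyKConnected (biladder p) 5 := by
  have hcard : Fintype.card (Bool × ZMod p) = 2 * p := by simp [ZMod.card]
  have acyclic : ∀ B : Set (Bool × ZMod p), B.ncard ≤ 2 → ¬HasCircuit ((biladder p).induce B) :=
    fun B hB hc => absurd (three_le_ncard_of_hasCircuit_induce hc) (by omega)
  refine ⟨⟨by omega, fun S hS => biladder_induce_compl_connected hp he (by omega)⟩, by omega,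
    fun A hA hAc hcut => ?_⟩
  exact (biladder_ncard_le_two_of_ncard_cutEdges_lt hp he hA hAc hcut).imp
    (acyclic A) (acyclic Aᶜ)
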